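/- arXiv:2203.08506 — 2 statements merged into one kernel-verified Lean document; each statement's English description precedes it below -/
import Mathlib

section
/- Let s, n be positive integers with s ≤ n. Then for every real number ξ, ∑_{p=1}^{s} (−1)^{s−p} · C(n−p, s−p) · C(n+s−1, n+s−p) · (1+ξ)^{n+s−p} = ∑_{k=0}^{s−1} C(n+s−1, k) · C(2(s−1)−k, s−1) · ξ^{k} + (−1)^{s−1} · ∑_{k=2s−1}^{n+s−1} C(n+s−1, k) · C(k−s, s−1) · ξ^{k}. -/
/-!
Expanding each `(1 + ξ)^(n+s-p)` binomially, the coefficient of `ξ^k` on the left is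
`C(n+s-1, k)` times an alternating convolution `∑ (-1)^j C(n-s+j, j) C(n+s-1-k, s-1-j)`.
Since `(-1)^j C(M+j, j)` is the generalized binomial coefficient `C(-M-1, j)`, Chu–Vandermonde
sums this to the generalized binomial coefficient `C(2s-2-k, s-1)`. It is an ordinary binomial
coefficient for `k ≤ 2s-2` (vanishing for `s ≤ k`), and equals `(-1)^(s-1) C(k-s, s-1)` for
`k ≥ 2s-1`.
-/

open Finset

theorem Nat.choose_mul_choose_sub_comm (m a b : ℕ) :
    m.choose a * (m - a).choose b = m.choose b * (m - b).choose a := by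
  have vanish : ∀ a b, m < a + b → m.choose a * (m - a).choose b = 0 := fun a b h => by
    rcases le_or_gt a m with ha | ha
    · rw [Nat.choose_eq_zero_of_lt (n := m - a) (by omega), mul_zero]
    · rw [Nat.choose_eq_zero_of_lt ha, zero_mul]
  rcases le_or_gt (a + b) m with h | h
  · have ha := Nat.choose_mul (n := m) (k := a + b) (s := a) (by omega)
    have hb := Nat.choose_mul (n := m) (k := a + b) (s := b) (by omega)
    rw [Nat.add_sub_cancel_left] at ha
    rw [Nat.add_sub_cancel] at hb
    rw [← ha, ← hb, Nat.choose_symm_add]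
  · rw [vanish a b h, vanish b a (by omega)]

theorem Finset.sum_antidiagonal_eq_sum_Icc {M : Type*} [AddCommMonoid M] {s : ℕ} (hs : 0 < s)
    (f : ℕ × ℕ → M) :
    ∑ ji ∈ antidiagonal (s - 1), f ji = ∑ p ∈ Icc 1 s, f (s - p, p - 1) := by
  refine sum_nbij' (fun ji => ji.2 + 1) (fun p => (s - p, p - 1)) ?_ ?_ ?_ ?_ ?_
    <;> simp only [mem_Icc, HasAntidiagonal.mem_antidiagonal, Prod.forall, Prod.mk.injEq]
  · omega
  · omega
  · omega
  · omega
  · intro j i hji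
    rw [show s - (i + 1) = j by omega, Nat.add_sub_cancel]

namespace Ring

theorem choose_neg_natCast_sub_one (m r : ℕ) :
    choose (-(m : ℤ) - 1) r = (-1) ^ r * (m + r).choose r := by
  rw [← neg_add', choose_neg, Units.smul_def, Int.negOnePow_def,
    show (m : ℤ) + 1 + r - 1 = ((m + r : ℕ) : ℤ) by push_cast; ring, choose_natCast]
  simp

theorem choose_natCast_sub_natCast_of_le {m k : ℕ} (h : k ≤ m) (r : ℕ) :
    choose ((m : ℤ) - k) r = (m - k).choose r := by
  rw [← Nat.cast_sub h, choose_natCast]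

theorem choose_natCast_sub_natCast_of_lt {m k : ℕ} (h : m < k) (r : ℕ) :
    choose ((m : ℤ) - k) r = (-1) ^ r * (k - m - 1 + r).choose r := by
  rw [show (m : ℤ) - k = -((k - m - 1 : ℕ) : ℤ) - 1 by omega, choose_neg_natCast_sub_one]

theorem choose_natCast_sub_natCast_sub_one (L M r : ℕ) :
    choose ((L : ℤ) - M - 1) r =
      ∑ ji ∈ antidiagonal r, (-1 : ℤ) ^ ji.1 * (M + ji.1).choose ji.1 * L.choose ji.2 := by
  rw [show (L : ℤ) - M - 1 = (-(M : ℤ) - 1) + L by ring, add_choose_eq _ (Commute.all _ _)]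
  refine sum_congr rfl fun ji _ => ?_
  rw [choose_neg_natCast_sub_one, choose_natCast]

end Ring

section BinomialExpansion

variable {R : Type*}

theorem one_add_pow_eq_sum_range [CommSemiring R] {m N : ℕ} (h : m ≤ N) (x : R) :
    (1 + x) ^ m = ∑ k ∈ range (N + 1), (m.choose k : R) * x ^ k := by
  rw [add_comm, add_pow]
  refine sum_subset_zero_on_sdiff (range_subset_range.mpr (by omega)) (fun k hk => ?_)
    (fun k _ => by rw [one_pow, mul_one, mul_comm])
  rw [Nat.choose_eq_zero_of_lt (by simpa using (mem_sdiff.mp hk).2), Nat.cast_zero, zero_mul]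

theorem choose_mul_one_add_pow_sub [CommSemiring R] (N i : ℕ) (x : R) :
    (N.choose i : R) * (1 + x) ^ (N - i) =
      ∑ k ∈ range (N + 1), (N.choose k : R) * ((N - k).choose i : R) * x ^ k := by
  rw [one_add_pow_eq_sum_range (N.sub_le i), mul_sum]
  refine sum_congr rfl fun k _ => ?_
  rw [← mul_assoc, ← Nat.cast_mul, Nat.choose_mul_choose_sub_comm, Nat.cast_mul]

theorem sum_antidiagonal_choose_mul_one_add_pow [CommRing R] (N M r : ℕ) (x : R) :
    ∑ ji ∈ antidiagonal r,
        (-1 : R) ^ ji.1 * ((M + ji.1).choose ji.1 : R) * (N.choose ji.2 : R) *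
          (1 + x) ^ (N - ji.2) =
      ∑ k ∈ range (N + 1),
        (N.choose k : R) * ((Ring.choose (((N - k : ℕ) : ℤ) - M - 1) r : ℤ) : R) * x ^ k := by
  simp_rw [mul_assoc _ (N.choose _ : R), choose_mul_one_add_pow_sub, mul_sum]
  rw [sum_comm]
  refine sum_congr rfl fun k _ => ?_
  rw [Ring.choose_natCast_sub_natCast_sub_one, Int.cast_sum, mul_sum, sum_mul]
  refine sum_congr rfl fun ji _ => ?_
  push_cast
  ring

theorem sum_antidiagonal_eq_U2_sum [CommRing R] {s n : ℕ} (hs : 0 < s) (hsn : s ≤ n) (x : R) :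
    ∑ ji ∈ antidiagonal (s - 1),
        (-1 : R) ^ ji.1 * ((n - s + ji.1).choose ji.1 : R) * ((n + s - 1).choose ji.2 : R) *
          (1 + x) ^ (n + s - 1 - ji.2) =
      ∑ p ∈ Icc 1 s, (-1 : R) ^ (s - p) * ((n - p).choose (s - p) : R) *
        ((n + s - 1).choose (n + s - p) : R) * (1 + x) ^ (n + s - p) := by
  rw [sum_antidiagonal_eq_sum_Icc hs]
  refine sum_congr rfl fun p hp => ?_
  rw [mem_Icc] at hp
  rw [Nat.choose_symm_of_eq_add (show n + s - 1 = n + s - p + (p - 1) by omega),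
    show n - s + (s - p) = n - p by omega, show n + s - 1 - (p - 1) = n + s - p by omega]

end BinomialExpansion

/-- Non-alternating closed form of the quantity `U₂`:
`∑_{p=1}^{s} (−1)^{s−p} C(n−p,s−p) C(n+s−1,n+s−p) (1+ξ)^{n+s−p}
  = ∑_{k=0}^{s−1} C(n+s−1,k) C(2(s−1)−k,s−1) ξ^k
    + (−1)^{s−1} ∑_{k=2s−1}^{n+s−1} C(n+s−1,k) C(k−s,s−1) ξ^k`. -/
theorem U2_nonalternating (s n : ℕ) (hs : 0 < s) (hsn : s ≤ n) (ξ : ℝ) :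
    ∑ p ∈ Finset.Icc 1 s,
      (-1 : ℝ) ^ (s - p) * (Nat.choose (n - p) (s - p) : ℝ) *
        (Nat.choose (n + s - 1) (n + s - p) : ℝ) * (1 + ξ) ^ (n + s - p)
      = ∑ k ∈ Finset.range s,
          (Nat.choose (n + s - 1) k : ℝ) *
            (Nat.choose (2 * (s - 1) - k) (s - 1) : ℝ) * ξ ^ k
        + (-1 : ℝ) ^ (s - 1) *
            ∑ k ∈ Finset.Icc (2 * s - 1) (n + s - 1),
              (Nat.choose (n + s - 1) k : ℝ) * (Nat.choose (k - s) (s - 1) : ℝ) * ξ ^ k := by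
  have upper_arg : ∀ k ≤ n + s - 1,
      ((n + s - 1 - k : ℕ) : ℤ) - (n - s : ℕ) - 1 = ((2 * (s - 1) : ℕ) : ℤ) - k := by
    omega
  rw [← sum_antidiagonal_eq_U2_sum hs hsn, sum_antidiagonal_choose_mul_one_add_pow,
    ← sum_range_add_sum_Ico _ (show 2 * s - 1 ≤ n + s - 1 + 1 by omega),
    Ico_add_one_right_eq_Icc, mul_sum]
  congr 1
  · refine (sum_subset_zero_on_sdiff (range_subset_range.mpr (by omega)) (fun k hk => ?_)
      (fun k hk => ?_)).symm
    · rw [mem_sdiff, mem_range, mem_range] at hk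
      rw [upper_arg k (by omega), Ring.choose_natCast_sub_natCast_of_le (by omega),
        Nat.choose_eq_zero_of_lt (n := 2 * (s - 1) - k) (by omega)]
      simp
    · rw [mem_range] at hk
      rw [upper_arg k (by omega), Ring.choose_natCast_sub_natCast_of_le (by omega)]
      push_cast
      rfl
  · refine sum_congr rfl fun k hk => ?_
    rw [mem_Icc] at hk
    rw [upper_arg k hk.2, Ring.choose_natCast_sub_natCast_of_lt (by omega),
      show k - 2 * (s - 1) - 1 + (s - 1) = k - s by omega]
    push_cast
    ring
end

section
/- Let k, l, s, n be integers with 1 ≤ k ≤ s, 1 ≤ l ≤ s, s ≤ n and s ≥ 2l. Then ∑_{j=0}^{k−1} (−1)^{k+j+1} · C(n+2k−s−1, k−j−1) · C(n−s+j, n−s) · C(s−j−1, 2l−1) = (−1)^{k+1} · ∑_{i=0}^{min(k−1, 2l−1)} C(n−s+i, n−s) · C(2k−2−i, k−1) · C(s−1−i, 2l−1−i). -/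
/-!
Put `K = k - 1`, `m = n - s`, `R = 2l - 1`, `e = s - 1`. Trinomial revision followed by the upper
Chu–Vandermonde identity (Vandermonde's identity at the negative arguments `-(a+1)`, `-(b+1)`)
gives `C(m+2K+1, K-j) C(m+j, m) = ∑_i C(m+i, m) C(2K-i, K) C(i, j)`. Substituting this and
exchanging the sums leaves the alternating sums `∑_j (-1)^j C(i, j) C(e-j, R)`, which are `i`-th
finite differences: the coefficient of `X^R` in `X^i (1+X)^(e-i) = ((1+X) - 1)^i (1+X)^(e-i)`,
that is `C(e-i, R-i)` for `i ≤ R` and `0` otherwise.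
-/

open Finset Polynomial

theorem Ring.choose_neg_natCast_add_one (a r : ℕ) :
    Ring.choose (-((a : ℤ) + 1)) r = (-1) ^ r * ((a + r).choose a : ℤ) := by
  rw [Ring.choose_neg, show (a : ℤ) + 1 + r - 1 = ((a + r : ℕ) : ℤ) by push_cast; ring,
    Ring.choose_natCast, Nat.choose_symm_add, Units.smul_def, Int.coe_negOnePow_natCast,
    smul_eq_mul]

theorem Nat.sum_antidiagonal_choose_add_mul_choose_add (a b N : ℕ) :
    ∑ ij ∈ antidiagonal N, (a + ij.1).choose a * (b + ij.2).choose b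
      = (a + b + N + 1).choose N := by
  have h := Ring.add_choose_eq N (Commute.all (-((a : ℤ) + 1)) (-((b : ℤ) + 1)))
  rw [show -((a : ℤ) + 1) + -((b : ℤ) + 1) = -(((a + b + 1 : ℕ) : ℤ) + 1) by push_cast; ring,
    Ring.choose_neg_natCast_add_one, Nat.choose_symm_add, add_right_comm _ 1] at h
  have hterm : ∀ ij ∈ antidiagonal N,
      Ring.choose (-((a : ℤ) + 1)) ij.1 * Ring.choose (-((b : ℤ) + 1)) ij.2
        = (-1) ^ N * ((a + ij.1).choose a * (b + ij.2).choose b : ℕ) := fun ij hij => by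
    rw [Ring.choose_neg_natCast_add_one, Ring.choose_neg_natCast_add_one,
      ← mem_antidiagonal.mp hij, pow_add]
    push_cast
    ring
  rw [sum_congr rfl hterm, ← mul_sum, mul_right_inj' (pow_ne_zero N (by norm_num))] at h
  exact_mod_cast h.symm

theorem sum_range_neg_one_pow_mul_choose_mul_choose_add (i d r : ℕ) :
    ∑ j ∈ range (i + 1), (-1 : ℤ) ^ j * i.choose j * (d + (i - j)).choose r
      = if i ≤ r then (d.choose (r - i) : ℤ) else 0 := by
  have hX : (X : ℤ[X]) ^ i * (1 + X) ^ d
      = ∑ j ∈ range (i + 1), C ((-1 : ℤ) ^ j * i.choose j) * (1 + X) ^ (d + (i - j)) := by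
    rw [show (X : ℤ[X]) = -1 + (1 + X) by ring, add_pow, sum_mul]
    refine sum_congr rfl fun j _ => ?_
    simp only [pow_add, map_mul, map_pow, map_neg, map_one, map_natCast]
    ring
  have := congrArg (coeff · r) hX
  simp only [finsetSum_coeff, coeff_C_mul, coeff_one_add_X_pow, coeff_X_pow_mul'] at this
  simpa using this.symm

theorem sum_range_neg_one_pow_mul_choose_mul_choose_sub {i e N : ℕ} (r : ℕ) (hiN : i ≤ N)
    (hie : i ≤ e) :
    ∑ j ∈ range (N + 1), (-1 : ℤ) ^ j * i.choose j * (e - j).choose r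
      = if i ≤ r then ((e - i).choose (r - i) : ℤ) else 0 := by
  rw [← sum_range_neg_one_pow_mul_choose_mul_choose_add, ← sum_subset (range_subset_range.mpr
    (by omega : i + 1 ≤ N + 1)) fun j _ hj => by
      rw [Nat.choose_eq_zero_of_lt (by simpa using hj)]; simp]
  refine sum_congr rfl fun j hj => ?_
  rw [show e - i + (i - j) = e - j by have := mem_range.mp hj; omega]

theorem Nat.choose_mul_choose_eq_sum_range (m K t : ℕ) (ht : t ≤ K) :
    (m + 2 * K + 1).choose (K - t) * (m + t).choose m
      = ∑ i ∈ range (K + 1), (m + i).choose m * (2 * K - i).choose K * i.choose t := by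
  rw [show K + 1 = t + (K - t + 1) by omega, sum_range_add, sum_eq_zero fun i hi => by
    rw [choose_eq_zero_of_lt (mem_range.mp hi), mul_zero], zero_add,
    show m + 2 * K + 1 = m + t + K + (K - t) + 1 by omega,
    ← sum_antidiagonal_choose_add_mul_choose_add, sum_mul,
    Finset.Nat.sum_antidiagonal_eq_sum_range_succ fun r r' =>
      (m + t + r).choose (m + t) * (K + r').choose K * (m + t).choose m]
  refine sum_congr rfl fun r hr => ?_
  have hr : r ≤ K - t := Nat.lt_succ_iff.mp (mem_range.mp hr)
  have htrinomial : (m + t + r).choose (m + t) * (m + t).choose m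
      = (m + (t + r)).choose m * (t + r).choose t := by
    rw [choose_mul (by omega), show m + t + r - m = t + r by omega, add_assoc,
      show m + t - m = t by omega]
  rw [show 2 * K - (t + r) = K + (K - t - r) by omega, mul_right_comm, htrinomial]
  ring

theorem sum_range_neg_one_pow_mul_choose_mul_choose_mul_choose (m K R e : ℕ) (hKe : K ≤ e) :
    ∑ j ∈ range (K + 1), (-1 : ℤ) ^ j * (m + 2 * K + 1).choose (K - j) * (m + j).choose m *
        (e - j).choose R
      = ∑ i ∈ range (min K R + 1),
          ((m + i).choose m * (2 * K - i).choose K * (e - i).choose (R - i) : ℤ) := by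
  calc _ = ∑ j ∈ range (K + 1), ∑ i ∈ range (K + 1),
          (((m + i).choose m * (2 * K - i).choose K : ℕ) : ℤ) *
            ((-1) ^ j * i.choose j * (e - j).choose R) := by
        refine sum_congr rfl fun j hj => ?_
        rw [mul_assoc _ (((m + 2 * K + 1).choose (K - j) : ℕ) : ℤ), ← Nat.cast_mul,
          Nat.choose_mul_choose_eq_sum_range _ _ _ (Nat.lt_succ_iff.mp (mem_range.mp hj)),
          Nat.cast_sum, mul_sum, sum_mul]
        refine sum_congr rfl fun i _ => ?_
        push_cast
        ring
    _ = ∑ i ∈ range (K + 1), (((m + i).choose m * (2 * K - i).choose K : ℕ) : ℤ) *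
          if i ≤ R then ((e - i).choose (R - i) : ℤ) else 0 := by
        rw [sum_comm]
        refine sum_congr rfl fun i hi => ?_
        have hiK := Nat.lt_succ_iff.mp (mem_range.mp hi)
        rw [← mul_sum, sum_range_neg_one_pow_mul_choose_mul_choose_sub _ hiK (by omega)]
    _ = _ := by
        simp only [mul_ite, mul_zero]
        rw [← sum_filter]
        refine sum_congr ?_ fun i _ => by rw [Nat.cast_mul]
        ext i
        simp only [mem_filter, mem_range]
        omega

theorem Ckl_nonalternating_general (k l s n : ℕ)
    (hk1 : 1 ≤ k) (hks : k ≤ s) (hsn : s ≤ n) :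
    ∑ j ∈ Finset.range k,
      (-1 : ℤ) ^ (k + j + 1) * (Nat.choose (n + 2 * k - s - 1) (k - j - 1) : ℤ) *
        (Nat.choose (n - s + j) (n - s) : ℤ) * (Nat.choose (s - j - 1) (2 * l - 1) : ℤ)
      = (-1 : ℤ) ^ (k + 1) *
          ∑ i ∈ Finset.range (min (k - 1) (2 * l - 1) + 1),
            (Nat.choose (n - s + i) (n - s) : ℤ) * (Nat.choose (2 * k - 2 - i) (k - 1) : ℤ) *
              (Nat.choose (s - 1 - i) (2 * l - 1 - i) : ℤ) := by
  obtain ⟨K, rfl⟩ : ∃ K, k = K + 1 := ⟨k - 1, by omega⟩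
  rw [show n + 2 * (K + 1) - s - 1 = n - s + 2 * K + 1 by omega,
    show 2 * (K + 1) - 2 = 2 * K by omega, Nat.add_sub_cancel]
  have hcore := sum_range_neg_one_pow_mul_choose_mul_choose_mul_choose (n - s) K (2 * l - 1)
    (s - 1) (by omega)
  rw [← hcore, mul_sum]
  refine sum_congr rfl fun j _ => ?_
  rw [show K + 1 - j - 1 = K - j by omega, Nat.sub_right_comm s j 1,
    show K + 1 + j + 1 = K + 1 + 1 + j by omega, pow_add]
  ring

/-- Non-alternating form of the sum `C_{k,l}` (case `s ≥ 2l`):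
`∑_{j=0}^{k−1} (−1)^{k+j+1} C(n+2k−s−1,k−j−1) C(n−s+j,n−s) C(s−j−1,2l−1)
  = (−1)^{k+1} ∑_{i=0}^{min(k−1,2l−1)} C(n−s+i,n−s) C(2k−2−i,k−1) C(s−1−i,2l−1−i)`. -/
theorem Ckl_nonalternating (k l s n : ℕ)
    (hk1 : 1 ≤ k) (hks : k ≤ s) (hl1 : 1 ≤ l) (hls : l ≤ s)
    (hsn : s ≤ n) (hs2l : 2 * l ≤ s) :
    ∑ j ∈ Finset.range k,
      (-1 : ℤ) ^ (k + j + 1) * (Nat.choose (n + 2 * k - s - 1) (k - j - 1) : ℤ) *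
        (Nat.choose (n - s + j) (n - s) : ℤ) * (Nat.choose (s - j - 1) (2 * l - 1) : ℤ)
      = (-1 : ℤ) ^ (k + 1) *
          ∑ i ∈ Finset.range (min (k - 1) (2 * l - 1) + 1),
            (Nat.choose (n - s + i) (n - s) : ℤ) * (Nat.choose (2 * k - 2 - i) (k - 1) : ℤ) *
              (Nat.choose (s - 1 - i) (2 * l - 1 - i) : ℤ) :=
  Ckl_nonalternating_general k l s n hk1 hks hsn
end
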